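/- For n = m = 4 and k = 3, the set X⁺ of 4×4 nonnegative matrices with nonnegative rank at most 3 is not convex: there exist matrices A₁, A₂ with rk₊(A₁) = rk₊(A₂) = 3 such that rk₊((A₁+A₂)/2) = 4. -/

import Mathlib

/-!
Nonnegative rank is squeezed between the rank and the number of columns, so a nonnegative
square matrix with nonzero determinant has full nonnegative rank. Take
`A t = e₁e₁ᵀ + e₂e₂ᵀ + vvᵀ` with `v = e₃ + t e₄`: for `t ≥ 0` it is a sum of three nonnegative
dyads containing a `3 × 3` identity minor, so `rk₊ (A t) = 3`, while the midpoint of `A s` and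
`A t` has determinant `(s - t)² / 4`, hence `rk₊ = 4` as soon as `s ≠ t`.
-/

open Matrix BigOperators Filter Topology

/-- The nonnegative rank: least `k` such that `P` is a sum of `k` nonnegative dyads. -/
noncomputable def nnRank {n m : ℕ} (P : Matrix (Fin n) (Fin m) ℝ) : ℕ :=
  sInf {k : ℕ | ∃ (c : Fin k → Fin n → ℝ) (r : Fin k → Fin m → ℝ),
    (∀ h i, 0 ≤ c h i) ∧ (∀ h j, 0 ≤ r h j) ∧
    P = ∑ h, Matrix.vecMulVec (c h) (r h)}

/-- Frobenius distance between two matrices. -/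
noncomputable def frobDist {n m : ℕ} (P N : Matrix (Fin n) (Fin m) ℝ) : ℝ :=
  Real.sqrt (∑ i, ∑ j, (P i j - N i j) ^ 2)

section
variable {n m k : ℕ}

def IsNonnegDyadSum (P : Matrix (Fin n) (Fin m) ℝ) (k : ℕ) : Prop :=
  ∃ (c : Fin k → Fin n → ℝ) (r : Fin k → Fin m → ℝ),
    (∀ h i, 0 ≤ c h i) ∧ (∀ h j, 0 ≤ r h j) ∧ P = ∑ h, vecMulVec (c h) (r h)

lemma nnRank_le_of_isNonnegDyadSum {P : Matrix (Fin n) (Fin m) ℝ} (hP : IsNonnegDyadSum P k) :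
    nnRank P ≤ k :=
  Nat.sInf_le hP

lemma IsNonnegDyadSum.nonneg {P : Matrix (Fin n) (Fin m) ℝ} (hP : IsNonnegDyadSum P k)
    (i : Fin n) (j : Fin m) : 0 ≤ P i j := by
  obtain ⟨c, r, hc, hr, rfl⟩ := hP
  rw [Matrix.sum_apply]
  exact Finset.sum_nonneg fun h _ => mul_nonneg (hc h i) (hr h j)

lemma sum_vecMulVec_eq_mul (c : Fin k → Fin n → ℝ) (r : Fin k → Fin m → ℝ) :
    ∑ h, vecMulVec (c h) (r h) = (of c)ᵀ * of r := by
  ext i j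
  simp [Matrix.sum_apply, Matrix.mul_apply, vecMulVec_apply]

lemma IsNonnegDyadSum.rank_le {P : Matrix (Fin n) (Fin m) ℝ} (hP : IsNonnegDyadSum P k) :
    P.rank ≤ k := by
  obtain ⟨c, r, -, -, rfl⟩ := hP
  rw [sum_vecMulVec_eq_mul]
  exact (rank_mul_le_left _ _).trans (rank_le_width _)

lemma eq_sum_vecMulVec_col (P : Matrix (Fin n) (Fin m) ℝ) :
    P = ∑ j, vecMulVec (fun i => P i j) (Pi.single j 1) := by
  ext i j
  simp [Matrix.sum_apply, vecMulVec_apply, Pi.single_apply]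

lemma isNonnegDyadSum_width {P : Matrix (Fin n) (Fin m) ℝ} (hP : ∀ i j, 0 ≤ P i j) :
    IsNonnegDyadSum P m := by
  refine ⟨_, _, fun j i => hP i j, fun j j' => ?_, eq_sum_vecMulVec_col P⟩
  rw [Pi.single_apply]
  split_ifs <;> norm_num

lemma nnRank_le_width {P : Matrix (Fin n) (Fin m) ℝ} (hP : ∀ i j, 0 ≤ P i j) : nnRank P ≤ m :=
  nnRank_le_of_isNonnegDyadSum (isNonnegDyadSum_width hP)

lemma isNonnegDyadSum_nnRank {P : Matrix (Fin n) (Fin m) ℝ} (hP : ∀ i j, 0 ≤ P i j) :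
    IsNonnegDyadSum P (nnRank P) :=
  Nat.sInf_mem (s := {k | IsNonnegDyadSum P k}) ⟨m, isNonnegDyadSum_width hP⟩

lemma rank_le_nnRank {P : Matrix (Fin n) (Fin m) ℝ} (hP : ∀ i j, 0 ≤ P i j) :
    P.rank ≤ nnRank P :=
  (isNonnegDyadSum_nnRank hP).rank_le

lemma IsNonnegDyadSum.nnRank_eq {P : Matrix (Fin n) (Fin m) ℝ} (hP : IsNonnegDyadSum P k)
    (hk : k ≤ P.rank) : nnRank P = k :=
  (nnRank_le_of_isNonnegDyadSum hP).antisymm <| hk.trans <| rank_le_nnRank hP.nonneg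

lemma nnRank_eq_of_det_ne_zero {P : Matrix (Fin n) (Fin n) ℝ} (hP : ∀ i j, 0 ≤ P i j)
    (hdet : P.det ≠ 0) : nnRank P = n :=
  (nnRank_le_width hP).antisymm <| by
    simpa [rank_of_det_ne_zero hdet] using rank_le_nnRank hP

end

def cornerVec (t : ℝ) : Fin 3 → Fin 4 → ℝ := ![![1, 0, 0, 0], ![0, 1, 0, 0], ![0, 0, 1, t]]

def cornerMatrix (t : ℝ) : Matrix (Fin 4) (Fin 4) ℝ :=
  ∑ h, vecMulVec (cornerVec t h) (cornerVec t h)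

lemma cornerMatrix_eq (t : ℝ) :
    cornerMatrix t = !![1, 0, 0, 0; 0, 1, 0, 0; 0, 0, 1, t; 0, 0, t, t ^ 2] := by
  ext i j
  fin_cases i <;> fin_cases j <;>
    simp [cornerMatrix, cornerVec, Fin.sum_univ_three, vecMulVec_apply, Matrix.sum_apply, sq]

lemma isNonnegDyadSum_cornerMatrix {t : ℝ} (ht : 0 ≤ t) : IsNonnegDyadSum (cornerMatrix t) 3 := by
  have hv (h : Fin 3) (i : Fin 4) : 0 ≤ cornerVec t h i := by
    fin_cases h <;> fin_cases i <;> simp [cornerVec, ht]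
  exact ⟨_, _, hv, hv, rfl⟩

lemma three_le_rank_cornerMatrix (t : ℝ) : 3 ≤ (cornerMatrix t).rank := by
  have hsub : (cornerMatrix t).submatrix Fin.castSucc Fin.castSucc = 1 := by
    rw [cornerMatrix_eq]
    ext i j
    fin_cases i <;> fin_cases j <;> simp
  simpa [hsub] using rank_submatrix_le (cornerMatrix t) Fin.castSucc Fin.castSucc

lemma det_midpoint_cornerMatrix (s t : ℝ) :
    ((1 / 2 : ℝ) • (cornerMatrix s + cornerMatrix t)).det = (s - t) ^ 2 / 4 := by
  rw [cornerMatrix_eq, cornerMatrix_eq, det_succ_row_zero]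
  simp only [of_add_of, add_cons, head_cons, tail_cons, add_zero, of_apply, cons_val',
    smul_eq_mul, smul_of, smul_cons, mul_zero, det_fin_three, submatrix_apply, cons_val,
    Fin.sum_univ_succ, Fin.coe_ofNat_eq_mod, Nat.zero_mod, pow_zero, Fin.zero_succAbove, sub_zero,
    cons_val_succ, ne_eq, Fin.succ_ne_zero, not_false_eq_true, Fin.succAbove_ne_zero_zero,
    Fin.succ_succAbove_one, sub_self]
  ring

theorem nnRank_le_three_not_convex :
    ∃ A₁ A₂ : Matrix (Fin 4) (Fin 4) ℝ,
      (∀ i j, 0 ≤ A₁ i j) ∧ (∀ i j, 0 ≤ A₂ i j) ∧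
      nnRank A₁ = 3 ∧ nnRank A₂ = 3 ∧
      nnRank ((1/2 : ℝ) • (A₁ + A₂)) = 4 := by
  have h₁ := isNonnegDyadSum_cornerMatrix zero_le_one
  have h₂ := isNonnegDyadSum_cornerMatrix zero_le_two
  refine ⟨cornerMatrix 1, cornerMatrix 2, h₁.nonneg, h₂.nonneg,
    h₁.nnRank_eq (three_le_rank_cornerMatrix 1), h₂.nnRank_eq (three_le_rank_cornerMatrix 2),
    nnRank_eq_of_det_ne_zero (fun i j => ?_) ?_⟩
  · simp only [Matrix.smul_apply, Matrix.add_apply, smul_eq_mul]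
    exact mul_nonneg (by norm_num) (add_nonneg (h₁.nonneg i j) (h₂.nonneg i j))
  · rw [det_midpoint_cornerMatrix]
    norm_num
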